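/- Let χ₁ and χ₂ be orthonormal vectors in ℂ²⊗ℂ² whose rank-one projections have equal partial traces on both subsystems (Tr₁ |χ₁⟩⟨χ₁| = Tr₁ |χ₂⟩⟨χ₂| and Tr₂ |χ₁⟩⟨χ₁| = Tr₂ |χ₂⟩⟨χ₂|). Then for every p ∈ [0,1] with p ≠ 1/2, the two-qubit state ρ(p) = p|χ₁⟩⟨χ₁| + (1−p)|χ₂⟩⟨χ₂| is NOT separable (it is entangled). That is, the masked states of classical mixtures of two single-qubit pure orthogonal states are entangled for all unequal mixing weights. -/

import Mathlib

open Matrix Kronecker Polynomial ComplexOrder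

noncomputable section

/-- Partial trace over the first subsystem of a two-qubit (4×4) matrix. -/
def ptr1 (M : Matrix (Fin 2 × Fin 2) (Fin 2 × Fin 2) ℂ) : Matrix (Fin 2) (Fin 2) ℂ :=
  Matrix.of fun j l => ∑ i, M (i, j) (i, l)

/-- Partial trace over the second subsystem of a two-qubit (4×4) matrix. -/
def ptr2 (M : Matrix (Fin 2 × Fin 2) (Fin 2 × Fin 2) ℂ) : Matrix (Fin 2) (Fin 2) ℂ :=
  Matrix.of fun i k => ∑ j, M (i, j) (k, j)

/-- Rank-one projection |v⟩⟨v| of a qubit vector. -/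
def proj2 (v : Fin 2 → ℂ) : Matrix (Fin 2) (Fin 2) ℂ :=
  Matrix.of fun i j => v i * star (v j)

/-- Rank-one projection |v⟩⟨v| of a two-qubit vector. -/
def proj4 (v : Fin 2 × Fin 2 → ℂ) : Matrix (Fin 2 × Fin 2) (Fin 2 × Fin 2) ℂ :=
  Matrix.of fun p q => v p * star (v q)

/-- Kronecker (tensor) product of two qubit vectors. -/
def tens (a b : Fin 2 → ℂ) : Fin 2 × Fin 2 → ℂ := fun p => a p.1 * b p.2

/-- Unit (normalized) vector. -/
def UnitVec {α : Type*} [Fintype α] (v : α → ℂ) : Prop := ∑ i, v i * star (v i) = 1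

/-- Hermitian inner product of two-qubit vectors. -/
def inner4 (v w : Fin 2 × Fin 2 → ℂ) : ℂ := ∑ p, star (v p) * w p

/-- A 2×2 density matrix: positive semidefinite with unit trace. -/
def IsDensity2 (A : Matrix (Fin 2) (Fin 2) ℂ) : Prop := A.PosSemidef ∧ A.trace = 1

/-- Separability of a two-qubit density matrix: a finite convex combination of
Kronecker products of 2×2 density matrices. -/
def Separable4 (ρ : Matrix (Fin 2 × Fin 2) (Fin 2 × Fin 2) ℂ) : Prop :=
  ∃ (n : ℕ) (w : Fin n → ℝ) (A B : Fin n → Matrix (Fin 2) (Fin 2) ℂ),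
    (∀ i, 0 ≤ w i) ∧ (∑ i, w i = 1) ∧
    (∀ i, IsDensity2 (A i)) ∧ (∀ i, IsDensity2 (B i)) ∧
    ρ = ∑ i, (w i : ℂ) • (A i ⊗ₖ B i)

/-- Standard basis vector e₀ of ℂ². -/
def e₀ : Fin 2 → ℂ := ![1, 0]

/-- Standard basis vector e₁ of ℂ². -/
def e₁ : Fin 2 → ℂ := ![0, 1]

/-- The masked mixture ρ(p) = p|χ₁⟩⟨χ₁| + (1−p)|χ₂⟩⟨χ₂|. -/
def mix (χ₁ χ₂ : Fin 2 × Fin 2 → ℂ) (p : ℝ) : Matrix (Fin 2 × Fin 2) (Fin 2 × Fin 2) ℂ :=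
  (p : ℂ) • proj4 χ₁ + (1 - (p : ℂ)) • proj4 χ₂

/-!
Write `X`, `Y` for the coefficient matrices of `χ₁`, `χ₂`. Masking says `X Xᴴ = Y Yᴴ` and
`Xᴴ X = Yᴴ Y`, orthogonality says `tr (Xᴴ Y) = 0`. For the traceless matrix `C = Xᴴ Y` both `Cᴴ C`
and `C Cᴴ` equal `S²`, where `S = Xᴴ X`, while `Cᴴ C + C Cᴴ` is scalar for every traceless `2 × 2`
matrix. Hence `S²` is scalar, and as `S² = S - det S` by Cayley–Hamilton (`tr S = 1`), `S = 1/2`: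
`χ₁` is maximally entangled.

A separable state has a positive semidefinite partial transpose (Peres). Let `φ` have coefficient
matrix `(Xᴴ J₂)ᵀ`. Since `J₂ A J₂ = Aᵀ - tr A` and `Xᴴ X = 1/2`, for every unit vector `χ` the
expectation in `φ` of the partial transpose of `|χ⟩⟨χ|` is `1/2 - |⟨χ₁|χ⟩|²`: it is `-1/2` for
`χ₁` and `1/2` for `χ₂`, hence `1/2 - p < 0` for `ρ(p)` when `p > 1/2`. The case `p < 1/2` follows
by exchanging `χ₁` and `χ₂`.
-/

namespace Matrix

variable {m n R : Type*}

def partialTranspose (ρ : Matrix (m × n) (m × n) R) : Matrix (m × n) (m × n) R :=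
  of fun p q => ρ (p.1, q.2) (q.1, p.2)

@[simp]
theorem partialTranspose_apply (ρ : Matrix (m × n) (m × n) R) (p q : m × n) :
    partialTranspose ρ p q = ρ (p.1, q.2) (q.1, p.2) := rfl

@[simp]
theorem partialTranspose_add [Add R] (ρ σ : Matrix (m × n) (m × n) R) :
    partialTranspose (ρ + σ) = partialTranspose ρ + partialTranspose σ := rfl

@[simp]
theorem partialTranspose_smul {α : Type*} [SMul α R] (c : α) (ρ : Matrix (m × n) (m × n) R) :
    partialTranspose (c • ρ) = c • partialTranspose ρ := rfl

theorem partialTranspose_sum [AddCommMonoid R] {ι : Type*} (s : Finset ι)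
    (ρ : ι → Matrix (m × n) (m × n) R) :
    partialTranspose (∑ i ∈ s, ρ i) = ∑ i ∈ s, partialTranspose (ρ i) := by
  ext p q
  simp [Matrix.sum_apply]

@[simp]
theorem partialTranspose_kronecker [Mul R] (A : Matrix m m R) (B : Matrix n n R) :
    partialTranspose (A ⊗ₖ B) = A ⊗ₖ Bᵀ := rfl

theorem map_star_mul [Fintype m] [CommSemiring R] [StarRing R] (A B : Matrix m m R) :
    (A * B).map star = A.map star * B.map star :=
  Matrix.map_mul (f := starRingEnd R)

def coeffMatrix (χ : m × n → R) : Matrix m n R := of (Function.curry χ)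

@[simp]
theorem coeffMatrix_apply (χ : m × n → R) (i : m) (j : n) : coeffMatrix χ i j = χ (i, j) := rfl

theorem coeffMatrix_uncurry (F : Matrix m n R) : coeffMatrix (Function.uncurry F) = F := rfl

theorem star_dotProduct_partialTranspose_vecMulVec_mulVec [Fintype m] [Fintype n] [CommRing R]
    [StarRing R] (χ φ : m × n → R) :
    star φ ⬝ᵥ (partialTranspose (vecMulVec χ (star χ)) *ᵥ φ) =
      (coeffMatrix χ * (coeffMatrix φ)ᵀ * (coeffMatrix χ * (coeffMatrix φ)ᵀ).map star).trace := by
  simp only [dotProduct, mulVec, trace, diag, mul_apply, map_apply, star_sum, star_mul',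
    Fintype.sum_prod_type, Finset.mul_sum, Finset.sum_mul, partialTranspose_apply, vecMulVec_apply,
    transpose_apply, coeffMatrix_apply, Pi.star_apply]
  refine Finset.sum_congr rfl fun a _ => ?_
  rw [Finset.sum_comm]
  exact Finset.sum_congr rfl fun c _ => Finset.sum_congr rfl fun b _ =>
    Finset.sum_congr rfl fun d _ => by ring

section FinTwo

variable [CommRing R]

theorem mul_self_fin_two (A : Matrix (Fin 2) (Fin 2) R) : A * A = A.trace • A - A.det • 1 := by
  ext i j
  fin_cases i <;> fin_cases j <;> simp [mul_apply, trace_fin_two, det_fin_two] <;> ring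

def J₂ : Matrix (Fin 2) (Fin 2) R := !![0, 1; -1, 0]

theorem J₂_mul_mul_J₂ (A : Matrix (Fin 2) (Fin 2) R) : J₂ * A * J₂ = Aᵀ - A.trace • 1 := by
  ext i j
  fin_cases i <;> fin_cases j <;>
    simp [J₂, mul_apply, trace_fin_two, Fin.sum_univ_two, vecMul, dotProduct]

@[simp]
theorem J₂_map_star [StarRing R] : (J₂ : Matrix (Fin 2) (Fin 2) R).map star = J₂ := by
  ext i j
  fin_cases i <;> fin_cases j <;> simp [J₂]

theorem trace_mul_J₂_mul_map_star [StarRing R] (C : Matrix (Fin 2) (Fin 2) R) :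
    (C * J₂ * (C * J₂).map star).trace = (C * Cᴴ).trace - C.trace * star C.trace := by
  have hCH : (C.map star)ᵀ = Cᴴ := rfl
  rw [map_star_mul, J₂_map_star, Matrix.mul_assoc, ← Matrix.mul_assoc J₂, J₂_mul_mul_J₂, hCH,
    Matrix.mul_sub, trace_sub, Matrix.mul_smul, trace_smul, Matrix.mul_one,
    ← trace_transpose (C.map star), hCH, trace_conjTranspose, smul_eq_mul, mul_comm (star _)]

theorem conjTranspose_mul_self_add_mul_conjTranspose_of_trace_eq_zero [StarRing R]
    {C : Matrix (Fin 2) (Fin 2) R} (hC : C.trace = 0) :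
    Cᴴ * C + C * Cᴴ = (Cᴴ * C).trace • 1 := by
  have h11 : C 1 1 = -C 0 0 := by rw [trace_fin_two] at hC; linear_combination hC
  ext i j
  fin_cases i <;> fin_cases j <;>
    simp only [Matrix.add_apply, mul_apply, Fin.sum_univ_two, conjTranspose_apply, trace_fin_two,
      Matrix.smul_apply, one_apply] <;> simp [h11] <;> ring

end FinTwo

theorem eq_half_smul_one_of_conjTranspose_mul_self_eq_sq {K : Type*} [Field K] [StarRing K]
    [NeZero (2 : K)] {S C : Matrix (Fin 2) (Fin 2) K} (hS : S.trace = 1) (hC : C.trace = 0)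
    (hCS : Cᴴ * C = S * S) (hCS' : C * Cᴴ = S * S) : S = (1 / 2 : K) • 1 := by
  have h := conjTranspose_mul_self_add_mul_conjTranspose_of_trace_eq_zero hC
  rw [hCS, hCS', ← two_smul K] at h
  generalize (S * S).trace = t at h
  have hSS : S * S = (t / 2) • 1 := by
    rw [div_eq_mul_inv, mul_comm, ← smul_smul, ← h, smul_smul, inv_mul_cancel₀ two_ne_zero,
      one_smul]
  have hSc : S = (t / 2 + S.det) • 1 := by
    calc S = S * S + S.det • 1 := by rw [mul_self_fin_two, hS, one_smul, sub_add_cancel]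
      _ = _ := by rw [hSS, add_smul]
  have hc : t / 2 + S.det = 1 / 2 := by
    have h := congrArg trace hSc
    rw [hS, trace_smul, trace_one, Fintype.card_fin, smul_eq_mul, Nat.cast_ofNat] at h
    exact (eq_div_iff two_ne_zero).mpr h.symm
  rw [hSc, hc]

end Matrix

theorem Separable4.posSemidef_partialTranspose {ρ : Matrix (Fin 2 × Fin 2) (Fin 2 × Fin 2) ℂ}
    (hρ : Separable4 ρ) : ρ.partialTranspose.PosSemidef := by
  obtain ⟨n, w, A, B, hw, -, hA, hB, rfl⟩ := hρ
  rw [partialTranspose_sum]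
  refine posSemidef_sum _ fun i _ => ?_
  rw [partialTranspose_smul, partialTranspose_kronecker]
  exact ((hA i).1.kronecker (hB i).1.transpose).smul (by exact_mod_cast hw i)

theorem proj4_eq_vecMulVec (χ : Fin 2 × Fin 2 → ℂ) : proj4 χ = vecMulVec χ (star χ) := rfl

theorem ptr2_proj4 (χ : Fin 2 × Fin 2 → ℂ) :
    ptr2 (proj4 χ) = coeffMatrix χ * (coeffMatrix χ)ᴴ := by
  ext i k
  simp [ptr2, proj4, mul_apply]

theorem ptr1_proj4 (χ : Fin 2 × Fin 2 → ℂ) :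
    ptr1 (proj4 χ) = ((coeffMatrix χ)ᴴ * coeffMatrix χ)ᵀ := by
  ext j l
  simp [ptr1, proj4, mul_apply, mul_comm]

theorem inner4_eq_trace (χ ψ : Fin 2 × Fin 2 → ℂ) :
    inner4 χ ψ = ((coeffMatrix χ)ᴴ * coeffMatrix ψ).trace := by
  simp only [inner4, trace, diag, mul_apply, conjTranspose_apply, coeffMatrix_apply,
    Fintype.sum_prod_type]
  exact Finset.sum_comm

theorem star_inner4 (χ ψ : Fin 2 × Fin 2 → ℂ) : star (inner4 χ ψ) = inner4 ψ χ := by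
  simp [inner4, star_sum, mul_comm]

theorem UnitVec.inner4_self_eq_one {χ : Fin 2 × Fin 2 → ℂ} (hχ : UnitVec χ) : inner4 χ χ = 1 := by
  rw [← hχ]
  simp only [inner4, mul_comm]

theorem conjTranspose_coeffMatrix_mul_self_eq_half {χ₁ χ₂ : Fin 2 × Fin 2 → ℂ} (h₁ : UnitVec χ₁)
    (horth : inner4 χ₁ χ₂ = 0) (hmask1 : ptr1 (proj4 χ₁) = ptr1 (proj4 χ₂))
    (hmask2 : ptr2 (proj4 χ₁) = ptr2 (proj4 χ₂)) :
    (coeffMatrix χ₁)ᴴ * coeffMatrix χ₁ = (1 / 2 : ℂ) • 1 := by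
  set X := coeffMatrix χ₁
  set Y := coeffMatrix χ₂
  have hA : X * Xᴴ = Y * Yᴴ := by simpa only [ptr2_proj4] using hmask2
  have hB : Xᴴ * X = Yᴴ * Y := by simpa only [ptr1_proj4, transpose_inj] using hmask1
  refine eq_half_smul_one_of_conjTranspose_mul_self_eq_sq (C := Xᴴ * Y) ?_ ?_ ?_ ?_
  · rw [← inner4_eq_trace, h₁.inner4_self_eq_one]
  · rwa [← inner4_eq_trace]
  · rw [conjTranspose_mul, conjTranspose_conjTranspose]
    calc Yᴴ * X * (Xᴴ * Y) = Yᴴ * (X * Xᴴ) * Y := by simp only [Matrix.mul_assoc]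
      _ = Yᴴ * Y * (Yᴴ * Y) := by rw [hA]; simp only [Matrix.mul_assoc]
      _ = _ := by rw [hB]
  · rw [conjTranspose_mul, conjTranspose_conjTranspose]
    calc Xᴴ * Y * (Yᴴ * X) = Xᴴ * (Y * Yᴴ) * X := by simp only [Matrix.mul_assoc]
      _ = _ := by rw [← hA]; simp only [Matrix.mul_assoc]

theorem star_dotProduct_partialTranspose_proj4_mulVec_eq {χ₀ χ φ : Fin 2 × Fin 2 → ℂ}
    (h₀ : (coeffMatrix χ₀)ᴴ * coeffMatrix χ₀ = (1 / 2 : ℂ) • 1)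
    (hφ : coeffMatrix φ = ((coeffMatrix χ₀)ᴴ * J₂)ᵀ) (hχ : UnitVec χ) :
    star φ ⬝ᵥ ((proj4 χ).partialTranspose *ᵥ φ) = 1 / 2 - inner4 χ₀ χ * star (inner4 χ₀ χ) := by
  rw [proj4_eq_vecMulVec, star_dotProduct_partialTranspose_vecMulVec_mulVec, hφ,
    transpose_transpose, ← Matrix.mul_assoc, trace_mul_J₂_mul_map_star, inner4_eq_trace,
    trace_mul_comm (coeffMatrix χ₀)ᴴ, conjTranspose_mul, conjTranspose_conjTranspose,
    Matrix.mul_assoc, ← Matrix.mul_assoc (coeffMatrix χ₀)ᴴ, h₀, smul_mul, Matrix.one_mul,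
    Matrix.mul_smul, trace_smul, trace_mul_comm, ← inner4_eq_trace, hχ.inner4_self_eq_one,
    smul_eq_mul, mul_one]

theorem mix_swap (χ₁ χ₂ : Fin 2 × Fin 2 → ℂ) (p : ℝ) : mix χ₁ χ₂ p = mix χ₂ χ₁ (1 - p) := by
  rw [mix, mix, add_comm]
  push_cast
  rw [sub_sub_cancel]

theorem star_dotProduct_partialTranspose_mix_mulVec (χ₁ χ₂ φ : Fin 2 × Fin 2 → ℂ) (p : ℝ) :
    star φ ⬝ᵥ ((mix χ₁ χ₂ p).partialTranspose *ᵥ φ) =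
      p * (star φ ⬝ᵥ ((proj4 χ₁).partialTranspose *ᵥ φ)) +
        (1 - p) * (star φ ⬝ᵥ ((proj4 χ₂).partialTranspose *ᵥ φ)) := by
  rw [mix, partialTranspose_add, partialTranspose_smul, partialTranspose_smul, add_mulVec,
    smul_mulVec, smul_mulVec, dotProduct_add, dotProduct_smul, dotProduct_smul, smul_eq_mul,
    smul_eq_mul]

theorem not_separable4_mix_of_half_lt {χ₁ χ₂ : Fin 2 × Fin 2 → ℂ} (h₁ : UnitVec χ₁)
    (h₂ : UnitVec χ₂) (horth : inner4 χ₁ χ₂ = 0) (hmask1 : ptr1 (proj4 χ₁) = ptr1 (proj4 χ₂))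
    (hmask2 : ptr2 (proj4 χ₁) = ptr2 (proj4 χ₂)) {p : ℝ} (hp : 1 / 2 < p) :
    ¬ Separable4 (mix χ₁ χ₂ p) := by
  intro hsep
  have h₀ := conjTranspose_coeffMatrix_mul_self_eq_half h₁ horth hmask1 hmask2
  set φ := Function.uncurry ((coeffMatrix χ₁)ᴴ * J₂)ᵀ
  have hφ₁ := star_dotProduct_partialTranspose_proj4_mulVec_eq h₀ (coeffMatrix_uncurry _) h₁
  have hφ₂ := star_dotProduct_partialTranspose_proj4_mulVec_eq h₀ (coeffMatrix_uncurry _) h₂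
  rw [h₁.inner4_self_eq_one, star_one, mul_one] at hφ₁
  rw [horth, zero_mul, sub_zero] at hφ₂
  have h := hsep.posSemidef_partialTranspose.dotProduct_mulVec_nonneg φ
  rw [star_dotProduct_partialTranspose_mix_mulVec, hφ₁, hφ₂,
    show (p : ℂ) * (1 / 2 - 1) + (1 - p) * (1 / 2) = ((1 / 2 - p : ℝ) : ℂ) by push_cast; ring,
    Complex.zero_le_real] at h
  linarith

theorem masked_mixture_of_orthogonal_states_entangled
    (χ₁ χ₂ : Fin 2 × Fin 2 → ℂ)
    (h₁ : UnitVec χ₁) (h₂ : UnitVec χ₂)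
    (horth : inner4 χ₁ χ₂ = 0)
    (hmask1 : ptr1 (proj4 χ₁) = ptr1 (proj4 χ₂))
    (hmask2 : ptr2 (proj4 χ₁) = ptr2 (proj4 χ₂))
    (p : ℝ) (hp' : p ≠ 1/2) :
    ¬ Separable4 (mix χ₁ χ₂ p) := by
  rcases hp'.lt_or_gt with hlt | hgt
  · rw [mix_swap]
    exact not_separable4_mix_of_half_lt h₂ h₁ (by rw [← star_inner4, horth, star_zero])
      hmask1.symm hmask2.symm (by linarith)
  · exact not_separable4_mix_of_half_lt h₁ h₂ horth hmask1 hmask2 hgt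

end
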